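/- arXiv:2605.00336 — 2 statements merged into one kernel-verified Lean document; each statement's English description precedes it below -/
import Mathlib

section
/- Let Φ be a real n × d matrix, let η > 0, set K = Φ Φᵀ, and define D : Finset (Fin n) → ℝ by D(S) = log det(I + η K_S), where K_S is the principal submatrix of K indexed by S (with D(∅) = 0). Then D is submodular: for all A ⊆ B ⊆ Fin n and all e ∉ B, D(A ∪ {e}) − D(A) ≥ D(B ∪ {e}) − D(B). -/
open Matrix

/-- The principal submatrix `K_S` of `K` indexed by `S`. -/
def prinSub {n : ℕ} (K : Matrix (Fin n) (Fin n) ℝ) (S : Finset (Fin n)) :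
    Matrix {x // x ∈ S} {x // x ∈ S} ℝ :=
  K.submatrix (fun i => (i : Fin n)) (fun j => (j : Fin n))

/-- Log-determinant diversity `D(S) = log det (I + η K_S)` (so `D(∅) = 0`). -/
noncomputable def Dlog {n : ℕ} (K : Matrix (Fin n) (Fin n) ℝ) (η : ℝ)
    (S : Finset (Fin n)) : ℝ :=
  Real.log (1 + η • prinSub K S).det

/-!
Let `Ψ` be the rows of `Φ` indexed by `S`. Sylvester's identity
`det (1 + η Ψ Ψᵀ) = det (1 + η Ψᵀ Ψ)` makes `D(S)` the log-determinant of the `d × d` matrix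
`G_S = 1 + η ∑_{i ∈ S} φᵢ φᵢᵀ`. Adding `e` is a rank-one update of `G_S`, so by the matrix
determinant lemma the marginal gain of `e` is `log (1 + η φₑᵀ G_S⁻¹ φₑ)`. Since `S ↦ G_S` is
monotone in the Loewner order and inversion reverses that order, the gain shrinks as `S` grows.
-/

open scoped MatrixOrder

theorem Matrix.det_add_vecMulVec {m α : Type*} [Fintype m] [DecidableEq m] [CommRing α]
    {A : Matrix m m α} (hA : IsUnit A.det) (u v : m → α) :
    (A + vecMulVec u v).det = A.det * (1 + v ⬝ᵥ A⁻¹ *ᵥ u) := by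
  rw [vecMulVec_eq Unit, det_add_replicateCol_mul_replicateRow hA, Matrix.mul_assoc,
    ← replicateCol_mulVec, det_one_add_mul_comm, det_one_add_replicateCol_mul_replicateRow]

theorem Matrix.IsSymm.dotProduct_mulVec_comm {n α : Type*} [Fintype n] [CommSemiring α]
    {M : Matrix n n α} (hM : M.IsSymm) (u v : n → α) :
    u ⬝ᵥ M *ᵥ v = v ⬝ᵥ M *ᵥ u := by
  rw [dotProduct_mulVec, ← mulVec_transpose, hM.eq, dotProduct_comm]

theorem Matrix.mulVec_nonsing_inv_mulVec {n α : Type*} [Fintype n] [DecidableEq n] [CommRing α]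
    {M : Matrix n n α} (hM : IsUnit M.det) (x : n → α) : M *ᵥ (M⁻¹ *ᵥ x) = x := by
  rw [mulVec_mulVec, mul_nonsing_inv _ hM, one_mulVec]

namespace Matrix.PosDef

variable {n : Type*} [Fintype n] [DecidableEq n] {M N : Matrix n n ℝ}

theorem dotProduct_inv_mulVec_nonneg (hM : M.PosDef) (x : n → ℝ) :
    0 ≤ x ⬝ᵥ M⁻¹ *ᵥ x := by
  simpa using hM.inv.posSemidef.dotProduct_mulVec_nonneg x

-- Equality holds at `y = M⁻¹ x`: this is the variational formula for `x ⬝ᵥ M⁻¹ *ᵥ x`.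
theorem two_mul_dotProduct_sub_le (hM : M.PosDef) (x y : n → ℝ) :
    2 * (y ⬝ᵥ x) - y ⬝ᵥ M *ᵥ y ≤ x ⬝ᵥ M⁻¹ *ᵥ x := by
  set z := M⁻¹ *ᵥ x
  have hMz : M *ᵥ z = x := mulVec_nonsing_inv_mulVec hM.det_pos.ne'.isUnit x
  have hsq : 0 ≤ (z - y) ⬝ᵥ M *ᵥ (z - y) := by
    simpa using hM.posSemidef.dotProduct_mulVec_nonneg (z - y)
  have hzy : z ⬝ᵥ M *ᵥ y = y ⬝ᵥ x := by
    rw [(isHermitian_iff_isSymm.mp hM.isHermitian).dotProduct_mulVec_comm, hMz]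
  rw [mulVec_sub, sub_dotProduct, dotProduct_sub, dotProduct_sub, hzy, hMz,
    dotProduct_comm z x] at hsq
  linarith

theorem dotProduct_inv_mulVec_anti (hM : M.PosDef) (hMN : M ≤ N) (x : n → ℝ) :
    x ⬝ᵥ N⁻¹ *ᵥ x ≤ x ⬝ᵥ M⁻¹ *ᵥ x := by
  have hN : N.PosDef := by simpa using hM.add_posSemidef (Matrix.le_iff.mp hMN)
  set y := N⁻¹ *ᵥ x
  have hNy : N *ᵥ y = x := mulVec_nonsing_inv_mulVec hN.det_pos.ne'.isUnit x
  have hgap : y ⬝ᵥ M *ᵥ y ≤ y ⬝ᵥ N *ᵥ y := by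
    simpa [sub_mulVec] using (Matrix.le_iff.mp hMN).dotProduct_mulVec_nonneg y
  calc x ⬝ᵥ N⁻¹ *ᵥ x = 2 * (y ⬝ᵥ x) - y ⬝ᵥ N *ᵥ y := by
        rw [hNy, dotProduct_comm]; ring
    _ ≤ 2 * (y ⬝ᵥ x) - y ⬝ᵥ M *ᵥ y := by linarith
    _ ≤ x ⬝ᵥ M⁻¹ *ᵥ x := hM.two_mul_dotProduct_sub_le x y

end Matrix.PosDef

section RegularizedGram

variable {ι m : Type*} [Fintype m] [DecidableEq m] (Φ : Matrix ι m ℝ)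

noncomputable def regularizedGram (η : ℝ) (S : Finset ι) : Matrix m m ℝ :=
  1 + η • ∑ i ∈ S, vecMulVec (Φ i) (Φ i)

variable {η : ℝ}

theorem regularizedGram_mono (hη : 0 ≤ η) : Monotone (regularizedGram Φ η) := by
  classical
  intro A B hAB
  have hdiff : regularizedGram Φ η B - regularizedGram Φ η A =
      η • ∑ i ∈ B \ A, vecMulVec (Φ i) (Φ i) := by
    rw [regularizedGram, regularizedGram, ← Finset.sum_sdiff hAB, smul_add]
    abel
  rw [Matrix.le_iff, hdiff]
  refine PosSemidef.smul (posSemidef_sum _ fun i _ => ?_) hη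
  simpa using posSemidef_vecMulVec_self_star (Φ i)

theorem posDef_regularizedGram (hη : 0 ≤ η) (S : Finset ι) :
    (regularizedGram Φ η S).PosDef := by
  have h1 : regularizedGram Φ η ∅ = 1 := by simp [regularizedGram]
  simpa [h1] using PosDef.one.add_posSemidef
    (Matrix.le_iff.mp (regularizedGram_mono Φ hη (Finset.empty_subset S)))

theorem det_regularizedGram_insert [DecidableEq ι] (hη : 0 ≤ η) {S : Finset ι} {e : ι}
    (he : e ∉ S) :
    (regularizedGram Φ η (insert e S)).det =
      (regularizedGram Φ η S).det *
        (1 + η * (Φ e ⬝ᵥ (regularizedGram Φ η S)⁻¹ *ᵥ Φ e)) := by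
  have hinsert : regularizedGram Φ η (insert e S) =
      regularizedGram Φ η S + vecMulVec (η • Φ e) (Φ e) := by
    rw [regularizedGram, regularizedGram, Finset.sum_insert he, smul_add, smul_vecMulVec]
    abel
  rw [hinsert, det_add_vecMulVec (posDef_regularizedGram Φ hη S).det_pos.ne'.isUnit,
    mulVec_smul, dotProduct_smul, smul_eq_mul]

end RegularizedGram

theorem Dlog_mul_transpose {n : ℕ} {m : Type*} [Fintype m] [DecidableEq m]
    (Φ : Matrix (Fin n) m ℝ) (η : ℝ) (S : Finset (Fin n)) :
    Dlog (Φ * Φᵀ) η S = Real.log (regularizedGram Φ η S).det := by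
  set Ψ := Φ.submatrix ((↑) : S → Fin n) id
  have hK : prinSub (Φ * Φᵀ) S = Ψ * Ψᵀ := by
    ext i j
    simp [prinSub, Ψ, mul_apply]
  have hGram : Ψᵀ * Ψ = ∑ i ∈ S, vecMulVec (Φ i) (Φ i) := by
    ext a b
    rw [← Finset.sum_coe_sort S]
    simp [Ψ, mul_apply, Matrix.sum_apply, vecMulVec_apply]
  rw [Dlog, hK, ← smul_mul, det_one_add_mul_comm, Matrix.mul_smul, hGram, regularizedGram]

theorem Dlog_insert_sub {n : ℕ} {m : Type*} [Fintype m] [DecidableEq m]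
    (Φ : Matrix (Fin n) m ℝ) {η : ℝ} (hη : 0 ≤ η) {S : Finset (Fin n)} {e : Fin n}
    (he : e ∉ S) :
    Dlog (Φ * Φᵀ) η (insert e S) - Dlog (Φ * Φᵀ) η S =
      Real.log (1 + η * (Φ e ⬝ᵥ (regularizedGram Φ η S)⁻¹ *ᵥ Φ e)) := by
  have hG := posDef_regularizedGram Φ hη S
  have hgain : 0 < 1 + η * (Φ e ⬝ᵥ (regularizedGram Φ η S)⁻¹ *ᵥ Φ e) := by
    have := hG.dotProduct_inv_mulVec_nonneg (Φ e)
    positivity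
  rw [Dlog_mul_transpose, Dlog_mul_transpose, det_regularizedGram_insert Φ hη he,
    Real.log_mul hG.det_pos.ne' hgain.ne', add_sub_cancel_left]

/-- with `K = Φ Φᵀ` and `η > 0`, the log-determinant diversity is
submodular. -/
theorem Dlog_submodular {n d : ℕ} (Φ : Matrix (Fin n) (Fin d) ℝ) (η : ℝ)
    (hη : 0 < η) :
    ∀ A B : Finset (Fin n), A ⊆ B → ∀ e : Fin n, e ∉ B →
      Dlog (Φ * Φᵀ) η (insert e A) - Dlog (Φ * Φᵀ) η A ≥
        Dlog (Φ * Φᵀ) η (insert e B) - Dlog (Φ * Φᵀ) η B := by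
  intro A B hAB e heB
  rw [Dlog_insert_sub Φ hη.le (fun heA => heB (hAB heA)), Dlog_insert_sub Φ hη.le heB]
  have hqB := (posDef_regularizedGram Φ hη.le B).dotProduct_inv_mulVec_nonneg (Φ e)
  have hqAB := (posDef_regularizedGram Φ hη.le A).dotProduct_inv_mulVec_anti
    (regularizedGram_mono Φ hη.le hAB) (Φ e)
  apply Real.log_le_log (by positivity)
  gcongr
end

section
/- Let n be a positive integer, let r : Fin n → ℝ satisfy r_i ≥ 0 for all i, let k : Fin n × Fin n → ℝ satisfy k(i,j) ≥ 0 for all i, j, let K be a real n × n positive semidefinite matrix, and let η > 0 and α, β, γ ≥ 0. Define R(S) = Σ_{i ∈ S} r_i, C(S) = Σ_{i=1}^{n} max_{j ∈ S} k(i,j) (max over the empty set being 0), and D(S) = log det(I + η K_S), where K_S is the principal submatrix of K indexed by S (with D(∅) = 0). Then the RCD objective F(S) = α R(S) + β C(S) + γ D(S) is monotone and submodular. -/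
/-!
Nonnegative combinations preserve monotonicity and submodularity, so `R`, `C` and `D` can be
treated separately. `R` is modular. Each `S ↦ max_{j ∈ S} k (i, j)` satisfies
`m (S ∪ {e}) = max (k (i, e)) (m S)`, and `t ↦ max a t - t` is antitone.

For `D` put `P = I + η K`, so that `D S = log det P_S`. Taking `S` as the leading block,
`det P_{S ∪ T} = det P_S * det W_T` with `W` the Schur complement of `P_S`. Since `P - I` is
positive semidefinite, so is `W - I`, which gives monotonicity. For `T = {e, f}`, the `2 × 2`
determinant `det W` is at most `W e e * W f f`, and `W e e = det P_{S ∪ {e}} / det P_S`; this is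
the inequality `det P_{S ∪ {e, f}} * det P_S ≤ det P_{S ∪ {e}} * det P_{S ∪ {f}}`.
-/

open Matrix Finset

/-- `covMax k i S = max_{j ∈ S} k (i, j)`, with the convention that the max over
the empty set is `0`. -/
noncomputable def covMax {n : ℕ} (k : Fin n × Fin n → ℝ) (i : Fin n)
    (S : Finset (Fin n)) : ℝ :=
  if h : S.Nonempty then S.sup' h (fun j => k (i, j)) else 0

/-- Facility-location coverage `C(S) = Σ_i max_{j ∈ S} k (i, j)`. -/
noncomputable def facilityCoverage {n : ℕ} (k : Fin n × Fin n → ℝ)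
    (S : Finset (Fin n)) : ℝ :=
  ∑ i : Fin n, covMax k i S

/-- The RCD objective `F(S) = α R(S) + β C(S) + γ D(S)` with relevance
`R(S) = Σ_{i ∈ S} r i`. -/
noncomputable def RCD {n : ℕ} (r : Fin n → ℝ) (k : Fin n × Fin n → ℝ)
    (K : Matrix (Fin n) (Fin n) ℝ) (η α β γ : ℝ) (S : Finset (Fin n)) : ℝ :=
  α * (∑ i ∈ S, r i) + β * facilityCoverage k S + γ * Dlog K η S

section SetFunction

variable {α : Type*}

def IsSubmodular [DecidableEq α] (F : Finset α → ℝ) : Prop :=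
  ∀ ⦃A B : Finset α⦄, A ⊆ B → ∀ ⦃e : α⦄, e ∉ B → F (insert e B) - F B ≤ F (insert e A) - F A

theorem monotone_sum_weight {r : α → ℝ} (hr : ∀ i, 0 ≤ r i) :
    Monotone fun S : Finset α => ∑ i ∈ S, r i :=
  fun _ _ hAB => Finset.sum_le_sum_of_subset_of_nonneg hAB fun i _ _ => hr i

variable [DecidableEq α]

theorem IsSubmodular.of_insert_insert {F : Finset α → ℝ}
    (h : ∀ ⦃S : Finset α⦄ ⦃e f : α⦄, e ∉ S → f ∉ S → e ≠ f →
      F (insert e (insert f S)) - F (insert f S) ≤ F (insert e S) - F S) :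
    IsSubmodular F := by
  suffices key : ∀ C A : Finset α, ∀ e ∉ A ∪ C,
      F (insert e (A ∪ C)) - F (A ∪ C) ≤ F (insert e A) - F A by
    intro A B hAB e he
    simpa [Finset.union_sdiff_of_subset hAB] using
      key (B \ A) A e (by simpa [Finset.union_sdiff_of_subset hAB])
  intro C
  induction C using Finset.induction_on with
  | empty => simp
  | @insert f C _ ih =>
    intro A e he
    rw [Finset.union_insert] at he ⊢
    have he' : e ∉ A ∪ C := fun h => he (Finset.mem_insert_of_mem h)
    by_cases hfA : f ∈ A ∪ C
    · rw [Finset.insert_eq_of_mem hfA]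
      exact ih A e he'
    · have hef : e ≠ f := by rintro rfl; exact he (Finset.mem_insert_self _ _)
      exact (h he' hfA hef).trans (ih A e he')

theorem IsSubmodular.add {F G : Finset α → ℝ} (hF : IsSubmodular F) (hG : IsSubmodular G) :
    IsSubmodular fun S => F S + G S := fun A B hAB e he => by
  linarith [hF hAB he, hG hAB he]

theorem IsSubmodular.const_mul {F : Finset α → ℝ} (hF : IsSubmodular F) {c : ℝ} (hc : 0 ≤ c) :
    IsSubmodular fun S => c * F S := fun A B hAB e he => by
  simpa only [← mul_sub] using mul_le_mul_of_nonneg_left (hF hAB he) hc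

theorem IsSubmodular.sum {ι : Type*} (s : Finset ι) {F : ι → Finset α → ℝ}
    (hF : ∀ i ∈ s, IsSubmodular (F i)) : IsSubmodular fun S => ∑ i ∈ s, F i S :=
  fun A B hAB e he => by
    simpa only [← Finset.sum_sub_distrib] using Finset.sum_le_sum fun i hi => hF i hi hAB he

theorem isSubmodular_sum_weight (r : α → ℝ) : IsSubmodular fun S => ∑ i ∈ S, r i :=
  fun A B hAB e he => by
    dsimp only
    rw [Finset.sum_insert he, Finset.sum_insert fun h => he (hAB h)]
    simp

end SetFunction

namespace Matrix

variable {ι κ R : Type*}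

theorem IsHermitian.toBlocks₂₁_eq [Star R] {M : Matrix (ι ⊕ κ) (ι ⊕ κ) R} (hM : M.IsHermitian) :
    M.toBlocks₂₁ = M.toBlocks₁₂ᴴ := by
  conv_lhs => rw [← hM.eq]
  rfl

theorem PosDef.of_posSemidef_sub_one [DecidableEq ι] {M : Matrix ι ι ℝ}
    (hM : (M - 1).PosSemidef) : M.PosDef := by
  simpa using PosDef.one.add_posSemidef hM

variable [Fintype ι] [DecidableEq ι]

noncomputable def schurCompl [CommRing R] (M : Matrix (ι ⊕ κ) (ι ⊕ κ) R) : Matrix κ κ R :=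
  M.toBlocks₂₂ - M.toBlocks₂₁ * M.toBlocks₁₁⁻¹ * M.toBlocks₁₂

theorem schurCompl_submatrix_sumMap [CommRing R] (M : Matrix (ι ⊕ κ) (ι ⊕ κ) R)
    {κ' : Type*} (g : κ' → κ) :
    (M.submatrix (Sum.map id g) (Sum.map id g)).schurCompl = M.schurCompl.submatrix g g := by
  ext i j
  simp [schurCompl, toBlocks₁₁, toBlocks₁₂, toBlocks₂₁, toBlocks₂₂, mul_apply]

theorem schurCompl_sub_fromBlocks_zero [CommRing R] (M : Matrix (ι ⊕ κ) (ι ⊕ κ) R)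
    (D : Matrix κ κ R) : (M - fromBlocks 0 0 0 D).schurCompl = M.schurCompl - D := by
  have hM : M - fromBlocks 0 0 0 D =
      fromBlocks M.toBlocks₁₁ M.toBlocks₁₂ M.toBlocks₂₁ (M.toBlocks₂₂ - D) := by
    ext (i | i) (j | j) <;> simp [toBlocks₁₁, toBlocks₁₂, toBlocks₂₁, toBlocks₂₂]
  simp [hM, schurCompl, sub_right_comm]

theorem IsHermitian.schurCompl [CommRing R] [StarRing R] {M : Matrix (ι ⊕ κ) (ι ⊕ κ) R}
    (hM : M.IsHermitian) : M.schurCompl.IsHermitian := by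
  rw [Matrix.schurCompl, hM.toBlocks₂₁_eq]
  exact (hM.submatrix Sum.inr).sub
    (isHermitian_conjTranspose_mul_mul _ (hM.submatrix Sum.inl).inv)

theorem PosSemidef.schurCompl [Field R] [PartialOrder R] [StarRing R] [StarOrderedRing R]
    [Fintype κ] {M : Matrix (ι ⊕ κ) (ι ⊕ κ) R}
    (hM : M.PosSemidef) (h₁₁ : M.toBlocks₁₁.PosDef) : M.schurCompl.PosSemidef := by
  have := M.toBlocks₁₁.invertibleOfIsUnitDet ((isUnit_iff_isUnit_det _).mp h₁₁.isUnit)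
  have hblocks := hM
  rw [← fromBlocks_toBlocks M, hM.isHermitian.toBlocks₂₁_eq, PosDef.fromBlocks₁₁ _ _ h₁₁]
    at hblocks
  rwa [Matrix.schurCompl, hM.isHermitian.toBlocks₂₁_eq]

theorem det_eq_det_toBlocks₁₁_mul_det_schurCompl [CommRing R] [Fintype κ] [DecidableEq κ]
    {M : Matrix (ι ⊕ κ) (ι ⊕ κ) R} (h : IsUnit M.toBlocks₁₁.det) :
    M.det = M.toBlocks₁₁.det * M.schurCompl.det := by
  have := M.toBlocks₁₁.invertibleOfIsUnitDet h
  conv_lhs => rw [← fromBlocks_toBlocks M]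
  rw [det_fromBlocks₁₁, invOf_eq_nonsing_inv, schurCompl]

theorem det_submatrix_sumMap_unique {κ' : Type*} [Unique κ'] [Fintype κ'] [DecidableEq κ']
    {M : Matrix (ι ⊕ κ) (ι ⊕ κ) ℝ} (h : IsUnit M.toBlocks₁₁.det) (g : κ' → κ) :
    (M.submatrix (Sum.map id g) (Sum.map id g)).det =
      M.toBlocks₁₁.det * M.schurCompl (g default) (g default) := by
  have := det_eq_det_toBlocks₁₁_mul_det_schurCompl
    (M := M.submatrix (Sum.map id g) (Sum.map id g)) h
  rwa [schurCompl_submatrix_sumMap, det_unique (M.schurCompl.submatrix g g)] at this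

theorem det_mul_det_toBlocks₁₁_le {M : Matrix (ι ⊕ Fin 2) (ι ⊕ Fin 2) ℝ} (hM : M.IsHermitian)
    (h : IsUnit M.toBlocks₁₁.det) :
    M.det * M.toBlocks₁₁.det ≤
      (M.submatrix (Sum.map id fun _ : Unit => 0) (Sum.map id fun _ : Unit => 0)).det *
        (M.submatrix (Sum.map id fun _ : Unit => 1) (Sum.map id fun _ : Unit => 1)).det := by
  have hW : M.schurCompl 1 0 = M.schurCompl 0 1 := by
    simpa using congrFun₂ hM.schurCompl.eq 0 1
  rw [det_eq_det_toBlocks₁₁_mul_det_schurCompl h, det_submatrix_sumMap_unique h,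
    det_submatrix_sumMap_unique h, det_fin_two, hW]
  nlinarith [mul_self_nonneg (M.toBlocks₁₁.det * M.schurCompl 0 1)]

variable [Fintype κ] [DecidableEq κ]

theorem PosSemidef.schurCompl_sub_one {M : Matrix (ι ⊕ κ) (ι ⊕ κ) ℝ}
    (hM : (M - 1).PosSemidef) : (M.schurCompl - 1).PosSemidef := by
  have hpad : (fromBlocks 1 0 0 0 : Matrix (ι ⊕ κ) (ι ⊕ κ) ℝ).PosSemidef := by
    rw [← diagonal_one, ← diagonal_zero, fromBlocks_diagonal]
    exact PosSemidef.diagonal (by rintro (i | i) <;> simp)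
  have hsplit : (M - 1) + fromBlocks 1 0 0 0 = M - fromBlocks 0 0 0 1 := by
    ext (i | i) (j | j) <;> simp [one_apply]
  have h₁₁ : (M - fromBlocks 0 0 0 1).toBlocks₁₁ = M.submatrix Sum.inl Sum.inl := by
    ext; simp [toBlocks₁₁]
  rw [← schurCompl_sub_fromBlocks_zero]
  refine PosSemidef.schurCompl (hsplit ▸ hM.add hpad) ?_
  rw [h₁₁]
  exact (PosDef.of_posSemidef_sub_one hM).submatrix Sum.inl_injective

theorem det_toBlocks₁₁_le_det [Unique κ] {M : Matrix (ι ⊕ κ) (ι ⊕ κ) ℝ}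
    (hM : (M - 1).PosSemidef) : M.toBlocks₁₁.det ≤ M.det := by
  have h₁₁ : 0 < M.toBlocks₁₁.det :=
    ((PosDef.of_posSemidef_sub_one hM).submatrix Sum.inl_injective).det_pos
  have hW : 1 ≤ M.schurCompl default default := by
    simpa using hM.schurCompl_sub_one.diag_nonneg (i := default)
  rw [det_eq_det_toBlocks₁₁_mul_det_schurCompl h₁₁.ne'.isUnit, det_unique M.schurCompl]
  exact le_mul_of_one_le_right h₁₁.le hW

end Matrix

section PrincipalSubmatrix

variable {n : ℕ}

theorem det_prinSub_eq_det_submatrix (P : Matrix (Fin n) (Fin n) ℝ) {T : Finset (Fin n)}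
    {σ : Type*} [Fintype σ] [DecidableEq σ] {u : σ → Fin n} (hu : Function.Injective u)
    (hT : ∀ x, x ∈ T ↔ ∃ z, u z = x) :
    (prinSub P T).det = (P.submatrix u u).det := by
  let e : σ ≃ T := Equiv.ofBijective (fun z => ⟨u z, (hT _).2 ⟨z, rfl⟩⟩)
    ⟨fun a b h => hu (congrArg Subtype.val h),
      fun x => ((hT x).1 x.2).imp fun _ hz => Subtype.ext hz⟩
  rw [← det_submatrix_equiv_self e]
  rfl

theorem det_prinSub_pos {P : Matrix (Fin n) (Fin n) ℝ} (hP : P.PosDef) (S : Finset (Fin n)) :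
    0 < (prinSub P S).det :=
  (hP.submatrix Subtype.val_injective).det_pos

theorem det_prinSub_le_det_prinSub_insert {P : Matrix (Fin n) (Fin n) ℝ}
    (hP : (P - 1).PosSemidef) {S : Finset (Fin n)} {e : Fin n} (he : e ∉ S) :
    (prinSub P S).det ≤ (prinSub P (insert e S)).det := by
  set u : S ⊕ Unit → Fin n := Sum.elim Subtype.val fun _ => e
  have hu : Function.Injective u :=
    Subtype.val_injective.sumElim (fun _ _ _ => rfl) fun x _ h => he (h ▸ x.2)
  rw [det_prinSub_eq_det_submatrix P (T := insert e S) hu (by simp [u]; grind)]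
  have hM : (P.submatrix u u - 1).PosSemidef := by
    rw [← submatrix_one u hu]
    exact hP.submatrix u
  exact det_toBlocks₁₁_le_det hM

theorem det_prinSub_insert_insert_mul_le {P : Matrix (Fin n) (Fin n) ℝ} (hP : P.PosDef)
    {S : Finset (Fin n)} {e f : Fin n} (he : e ∉ S) (hf : f ∉ S) (hef : e ≠ f) :
    (prinSub P (insert e (insert f S))).det * (prinSub P S).det ≤
      (prinSub P (insert e S)).det * (prinSub P (insert f S)).det := by
  set u : S ⊕ Fin 2 → Fin n := Sum.elim Subtype.val ![e, f]
  have hu : Function.Injective u := by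
    refine Subtype.val_injective.sumElim ?_ fun x => Fin.forall_fin_two.2 ⟨?_, ?_⟩
    · simp [Function.Injective, Fin.forall_fin_two, hef, hef.symm]
    · exact fun h => he ((show (x : Fin n) = e from h) ▸ x.2)
    · exact fun h => hf ((show (x : Fin n) = f from h) ▸ x.2)
  have hrestrict (c : Fin 2) : Function.Injective (u ∘ Sum.map id fun _ : Unit => c) :=
    hu.comp (Sum.map_injective.2 ⟨Function.injective_id, fun _ _ _ => rfl⟩)
  rw [det_prinSub_eq_det_submatrix P (T := insert e (insert f S)) hu
      (by simp [u, Fin.exists_fin_two]; grind),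
    det_prinSub_eq_det_submatrix P (T := insert e S) (hrestrict 0) (by simp [u]; grind),
    det_prinSub_eq_det_submatrix P (T := insert f S) (hrestrict 1) (by simp [u]; grind),
    ← submatrix_submatrix, ← submatrix_submatrix]
  exact det_mul_det_toBlocks₁₁_le (hP.isHermitian.submatrix u) (det_prinSub_pos hP S).ne'.isUnit

end PrincipalSubmatrix

section Coverage

variable {n : ℕ} {k : Fin n × Fin n → ℝ}

theorem covMax_insert {i e : Fin n} (hk : 0 ≤ k (i, e)) (S : Finset (Fin n)) :
    covMax k i (insert e S) = max (k (i, e)) (covMax k i S) := by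
  rcases S.eq_empty_or_nonempty with rfl | hS
  · simp [covMax, hk]
  · rw [covMax, covMax, dif_pos hS, dif_pos (Finset.insert_nonempty e S), Finset.sup'_insert]

theorem monotone_covMax {i : Fin n} (hk : ∀ j, 0 ≤ k (i, j)) : Monotone (covMax k i) :=
  Finset.monotone_iff_forall_le_insert.2 fun S e _ =>
    (covMax_insert (hk e) S).symm ▸ le_max_right _ _

theorem isSubmodular_covMax {i : Fin n} (hk : ∀ j, 0 ≤ k (i, j)) : IsSubmodular (covMax k i) :=
  fun A B hAB e _ => by
    rw [covMax_insert (hk e), covMax_insert (hk e), ← max_sub_sub_right, ← max_sub_sub_right,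
      sub_self, sub_self]
    exact max_le_max (sub_le_sub_left (monotone_covMax hk hAB) _) le_rfl

theorem monotone_facilityCoverage (hk : ∀ i j, 0 ≤ k (i, j)) :
    Monotone (facilityCoverage k) :=
  fun _ _ hAB => Finset.sum_le_sum fun i _ => monotone_covMax (hk i) hAB

theorem isSubmodular_facilityCoverage (hk : ∀ i j, 0 ≤ k (i, j)) :
    IsSubmodular (facilityCoverage k) :=
  IsSubmodular.sum _ fun i _ => isSubmodular_covMax (hk i)

end Coverage

section LogDet

variable {n : ℕ} {K : Matrix (Fin n) (Fin n) ℝ} {η : ℝ}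

theorem Dlog_eq_log_det_prinSub (K : Matrix (Fin n) (Fin n) ℝ) (η : ℝ) (S : Finset (Fin n)) :
    Dlog K η S = Real.log (prinSub (1 + η • K) S).det := by
  rw [Dlog, prinSub, prinSub, submatrix_add, Pi.add_apply, Pi.add_apply,
    submatrix_one _ Subtype.val_injective]
  rfl

theorem posSemidef_one_add_smul_sub_one (hK : K.PosSemidef) (hη : 0 ≤ η) :
    (1 + η • K - 1).PosSemidef := by
  rw [add_sub_cancel_left]
  exact hK.smul hη

theorem monotone_Dlog (hK : K.PosSemidef) (hη : 0 ≤ η) : Monotone (Dlog K η) := by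
  have hP := posSemidef_one_add_smul_sub_one hK hη
  refine Finset.monotone_iff_forall_le_insert.2 fun S e he => ?_
  simp only [Dlog_eq_log_det_prinSub]
  exact Real.log_le_log (det_prinSub_pos (.of_posSemidef_sub_one hP) S)
    (det_prinSub_le_det_prinSub_insert hP he)

theorem isSubmodular_Dlog (hK : K.PosSemidef) (hη : 0 ≤ η) : IsSubmodular (Dlog K η) := by
  have hP := PosDef.of_posSemidef_sub_one (posSemidef_one_add_smul_sub_one hK hη)
  refine IsSubmodular.of_insert_insert fun S e f he hf hef => ?_
  simp only [Dlog_eq_log_det_prinSub]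
  have hpos := det_prinSub_pos hP
  have hlog := Real.log_le_log (mul_pos (hpos _) (hpos _))
    (det_prinSub_insert_insert_mul_le hP he hf hef)
  rw [Real.log_mul (hpos _).ne' (hpos _).ne', Real.log_mul (hpos _).ne' (hpos _).ne'] at hlog
  linarith

end LogDet

theorem RCD_monotone_submodular_general {n : ℕ}
    (r : Fin n → ℝ) (hr : ∀ i, 0 ≤ r i)
    (k : Fin n × Fin n → ℝ) (hk : ∀ i j : Fin n, 0 ≤ k (i, j))
    (K : Matrix (Fin n) (Fin n) ℝ) (hK : K.PosSemidef)
    (η : ℝ) (hη : 0 < η) (α β γ : ℝ) (hα : 0 ≤ α) (hβ : 0 ≤ β) (hγ : 0 ≤ γ) :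
    (∀ A B : Finset (Fin n), A ⊆ B →
      RCD r k K η α β γ A ≤ RCD r k K η α β γ B) ∧
    (∀ A B : Finset (Fin n), A ⊆ B → ∀ e : Fin n, e ∉ B →
      RCD r k K η α β γ (insert e A) - RCD r k K η α β γ A ≥
        RCD r k K η α β γ (insert e B) - RCD r k K η α β γ B) := by
  have hmono : Monotone (RCD r k K η α β γ) :=
    (((monotone_sum_weight hr).const_mul hα).add
      ((monotone_facilityCoverage hk).const_mul hβ)).add ((monotone_Dlog hK hη.le).const_mul hγ)
  have hsub : IsSubmodular (RCD r k K η α β γ) :=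
    (((isSubmodular_sum_weight r).const_mul hα).add
      ((isSubmodular_facilityCoverage hk).const_mul hβ)).add
      ((isSubmodular_Dlog hK hη.le).const_mul hγ)
  exact ⟨fun A B hAB => hmono hAB, fun A B hAB e he => hsub hAB he⟩

/-- the RCD objective is monotone and submodular. -/
theorem RCD_monotone_submodular {n : ℕ} (hn : 0 < n)
    (r : Fin n → ℝ) (hr : ∀ i, 0 ≤ r i)
    (k : Fin n × Fin n → ℝ) (hk : ∀ i j : Fin n, 0 ≤ k (i, j))
    (K : Matrix (Fin n) (Fin n) ℝ) (hK : K.PosSemidef)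
    (η : ℝ) (hη : 0 < η) (α β γ : ℝ) (hα : 0 ≤ α) (hβ : 0 ≤ β) (hγ : 0 ≤ γ) :
    (∀ A B : Finset (Fin n), A ⊆ B →
      RCD r k K η α β γ A ≤ RCD r k K η α β γ B) ∧
    (∀ A B : Finset (Fin n), A ⊆ B → ∀ e : Fin n, e ∉ B →
      RCD r k K η α β γ (insert e A) - RCD r k K η α β γ A ≥
        RCD r k K η α β γ (insert e B) - RCD r k K η α β γ B) :=
  RCD_monotone_submodular_general r hr k hk K hK η hη α β γ hα hβ hγ
end
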